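/- arXiv:2110.01541 — 3 statements merged into one kernel-verified Lean document; each statement's English description precedes it below -/
import Mathlib

section
/- Let T be a measure-preserving transformation of a probability space (X, Σ, ν), and let μ_{(T,ν)} be the probability measure on X^∞ determined by μ_{(T,ν)}(A_0 × ⋯ × A_{n−1} × X × ⋯) = ν(∩_{i=0}^{n−1} T^{−i} A_i). Then for every finite measurable partition 𝒫 of X, H^sd(μ_{(T,ν)}, 𝒫) equals the Kolmogorov–Sinai entropy E(T, ν, 𝒫) of T with respect to 𝒫. -/
open MeasureTheory Filter
open scoped NNReal ENNReal

/-- `phi x = x * log x` (with `phi 0 = 0` since `Real.log 0 = 0`). -/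
noncomputable def phi (x : ℝ) : ℝ := x * Real.log x

/-- Shannon entropy of a finite indexed family of sets w.r.t. a measure. -/
noncomputable def partEnt {Ω : Type*} [MeasurableSpace Ω] (μ : Measure Ω)
    {ι : Type*} [Fintype ι] (A : ι → Set Ω) : ℝ :=
  -∑ i, phi ((μ (A i)).toReal)

/-- A finite measurable partition, given as an indexed family. -/
structure IsPartition {Ω : Type*} [MeasurableSpace Ω] {ι : Type*} (A : ι → Set Ω) : Prop where
  meas : ∀ i, MeasurableSet (A i)
  disj : Pairwise (Function.onFun Disjoint A)
  cover : (⋃ i, A i) = Set.univ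

/-- The length-`n` cylinder partition `𝒫̄^n` of `X^∞` built from the family `A`. -/
def cyl {X ι : Type*} (A : ι → Set X) (n : ℕ) (w : Fin n → ι) : Set (ℕ → X) :=
  {x | ∀ i : Fin n, x i ∈ A (w i)}

/-- Stochastic dynamical entropy of `μ` relative to a partition of `X`. -/
noncomputable def HsdP {X : Type*} [MeasurableSpace X] (μ : Measure (ℕ → X))
    {ι : Type*} [Fintype ι] (A : ι → Set X) : EReal :=
  limsup (fun n : ℕ => ((partEnt μ (cyl A n) / n : ℝ) : EReal)) atTop

/-- Stochastic dynamical entropy of `μ`. -/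
noncomputable def Hsd {X : Type*} [MeasurableSpace X] (μ : Measure (ℕ → X)) : EReal :=
  ⨆ (k : ℕ) (A : Fin k → Set X) (_ : IsPartition A), HsdP μ A

/-- The dynamical join `∨_{i=0}^{n-1} T^{-i} 𝒜`. -/
def dynJoin {Ω ι : Type*} (T : Ω → Ω) (A : ι → Set Ω) (n : ℕ) (w : Fin n → ι) : Set Ω :=
  {x | ∀ i : Fin n, T^[i] x ∈ A (w i)}

/-- Kolmogorov–Sinai entropy of `T` w.r.t. `ν` and a partition. -/
noncomputable def ksEntP {Ω : Type*} [MeasurableSpace Ω] (T : Ω → Ω) (ν : Measure Ω)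
    {ι : Type*} [Fintype ι] (A : ι → Set Ω) : EReal :=
  limsup (fun n : ℕ => ((partEnt ν (dynJoin T A n) / n : ℝ) : EReal)) atTop

/-- Kolmogorov–Sinai entropy of `T` w.r.t. `ν`. -/
noncomputable def ksEnt {Ω : Type*} [MeasurableSpace Ω] (T : Ω → Ω) (ν : Measure Ω) : EReal :=
  ⨆ (k : ℕ) (A : Fin k → Set Ω) (_ : IsPartition A), ksEntP T ν A

/-- The shift on the path space `X^∞`. -/
def shift {X : Type*} : (ℕ → X) → (ℕ → X) := fun x n => x (n + 1)

/-- for the path-space measure of `(T, ν)`,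
`H^sd(μ_{(T,ν)}, 𝒫) = E(T, ν, 𝒫)`. -/
theorem hsdP_pathMeasure_eq_ksEntP {X : Type*} [MeasurableSpace X]
    (ν : Measure X) [IsProbabilityMeasure ν]
    {T : X → X} (hT : MeasurePreserving T ν ν)
    {ι : Type*} [Fintype ι] (A : ι → Set X) (hA : IsPartition A) :
    HsdP (Measure.map (fun x => fun n => T^[n] x) ν) A = ksEntP T ν A := by
  have hTm : Measurable T := hT.measurable
  have hmap : Measurable (fun x : X => fun n => T^[n] x) :=
    measurable_pi_lambda _ (fun n => hTm.iterate n)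
  have key : ∀ n : ℕ, partEnt (Measure.map (fun x => fun n => T^[n] x) ν) (cyl A n)
      = partEnt ν (dynJoin T A n) := by
    intro n
    unfold partEnt
    congr 1
    apply Finset.sum_congr rfl
    intro w _
    have hcyl : cyl A n w = ⋂ i : Fin n, (fun x : ℕ → X => x (i : ℕ)) ⁻¹' A (w i) := by
      ext x; simp [cyl]
    have hmeas : MeasurableSet (cyl A n w) := by
      rw [hcyl]
      exact MeasurableSet.iInter fun i => (measurable_pi_apply (i : ℕ)) (hA.meas (w i))
    rw [Measure.map_apply hmap hmeas]
    rfl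
  unfold HsdP ksEntP
  simp only [key]
end

section
/- Let (r_n)_{n≥0} be a strictly increasing sequence of nonnegative integers with r_n ≤ (n+1)k − 1 for all n, for some fixed k ≥ 1, and let 𝔎: X^∞ → X^∞ be the restriction map (x_0, x_1, …) ↦ (x_{r_0}, x_{r_1}, …). Then for every probability measure μ on X^∞, H^sd(𝔎_*μ) ≤ k·H^sd(μ). -/
open MeasureTheory Filter
open scoped NNReal ENNReal

/-!
Fix a partition `A` of `X`. Since `r i < n k` for `i < n`, the preimage under `x ↦ x ∘ r` of the
cylinder partition `𝒫̄^n` is coarser than `𝒫̄^{nk}`: each of its cells is the union of the cells of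
`𝒫̄^{nk}` whose word restricts along `r` to the given word. Entropy only drops under coarsening, so
`E(𝔎_*μ, 𝒫̄^n) ≤ E(μ, 𝒫̄^{nk})`; dividing by `n = nk / k` and passing to the subsequence `nk`
of the limsup gives `H^sd(𝔎_*μ, A) ≤ k H^sd(μ, A)`.
-/

open Finset

lemma sum_phi_le_phi_sum {α : Type*} (s : Finset α) {f : α → ℝ} (hf : ∀ a ∈ s, 0 ≤ f a) :
    ∑ a ∈ s, phi (f a) ≤ phi (∑ a ∈ s, f a) := by
  calc ∑ a ∈ s, phi (f a) ≤ ∑ a ∈ s, f a * Real.log (∑ b ∈ s, f b) := by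
        refine sum_le_sum fun a ha => ?_
        rcases (hf a ha).eq_or_lt with h | h
        · simp [phi, ← h]
        · exact mul_le_mul_of_nonneg_left
            (Real.log_le_log h (single_le_sum hf ha)) (hf a ha)
    _ = phi (∑ b ∈ s, f b) := by rw [← sum_mul, phi]

lemma partEnt_le_of_measure_eq_sum_fiberwise {Ω Ω' ι κ : Type*} [MeasurableSpace Ω]
    [MeasurableSpace Ω'] [Fintype ι] [Fintype κ] [DecidableEq ι] {ν : Measure Ω'}
    {μ : Measure Ω} [IsFiniteMeasure μ] {B : ι → Set Ω'} {C : κ → Set Ω} (F : κ → ι)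
    (hBC : ∀ i, ν (B i) = ∑ v with F v = i, μ (C v)) :
    partEnt ν B ≤ partEnt μ C := by
  rw [partEnt, partEnt, neg_le_neg_iff, ← sum_fiberwise univ F]
  refine sum_le_sum fun i _ => ?_
  rw [hBC, ENNReal.toReal_sum fun v _ => measure_ne_top μ _]
  exact sum_phi_le_phi_sum _ fun v _ => ENNReal.toReal_nonneg

section Cylinder

variable {X ι : Type*} {A : ι → Set X}

lemma measurableSet_cyl [MeasurableSpace X] (hA : ∀ i, MeasurableSet (A i)) (n : ℕ)
    (w : Fin n → ι) : MeasurableSet (cyl A n w) := by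
  have : cyl A n w = ⋂ i : Fin n, (fun x : ℕ → X => x i) ⁻¹' A (w i) := by
    ext x; simp [cyl]
  rw [this]
  exact MeasurableSet.iInter fun i => measurable_pi_apply (i : ℕ) (hA (w i))

lemma pairwise_disjoint_cyl (hA : Pairwise (Function.onFun Disjoint A)) (n : ℕ) :
    Pairwise (Function.onFun Disjoint (cyl A n)) := by
  intro w w' hww'
  obtain ⟨i, hi⟩ := Function.ne_iff.mp hww'
  exact Set.disjoint_left.mpr fun x hx hx' => Set.disjoint_left.mp (hA hi) (hx i) (hx' i)

lemma preimage_comp_cyl [Fintype ι] [DecidableEq ι]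
    (hdisj : Pairwise (Function.onFun Disjoint A)) (hcover : ⋃ i, A i = Set.univ)
    {r : ℕ → ℕ} {n N : ℕ} (hrN : ∀ i : Fin n, r i < N) (w : Fin n → ι) :
    (fun x : ℕ → X => x ∘ r) ⁻¹' cyl A n w
      = ⋃ v ∈ ({v | (fun i : Fin n => v ⟨r i, hrN i⟩) = w} : Finset (Fin N → ι)), cyl A N v := by
  ext x
  simp only [Set.mem_preimage, Set.mem_iUnion, mem_filter, mem_univ, true_and, exists_prop]
  constructor
  · intro hx
    have hcell : ∀ j, ∃ i, x j ∈ A i := fun j => Set.mem_iUnion.mp (hcover ▸ Set.mem_univ (x j))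
    choose c hc using hcell
    refine ⟨fun j => c j, funext fun i => ?_, fun j => hc j⟩
    by_contra hne
    exact Set.disjoint_left.mp (hdisj hne) (hc (r i)) (hx i)
  · rintro ⟨v, rfl, hxv⟩ i
    exact hxv ⟨r i, hrN i⟩

lemma partEnt_map_comp_cyl_le [MeasurableSpace X] [Fintype ι] (μ : Measure (ℕ → X))
    [IsFiniteMeasure μ] (hA : IsPartition A) {r : ℕ → ℕ} {n N : ℕ} (hrN : ∀ i : Fin n, r i < N) :
    partEnt (μ.map fun x => x ∘ r) (cyl A n) ≤ partEnt μ (cyl A N) := by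
  classical
  have hmeas : Measurable fun x : ℕ → X => x ∘ r :=
    measurable_pi_lambda _ fun i => measurable_pi_apply (r i)
  refine partEnt_le_of_measure_eq_sum_fiberwise (fun v i => v ⟨r i, hrN i⟩) fun w => ?_
  rw [Measure.map_apply hmeas (measurableSet_cyl hA.meas n w),
    preimage_comp_cyl hA.disj hA.cover hrN w,
    measure_biUnion_finset (fun v _ v' _ h => pairwise_disjoint_cyl hA.disj N h)
      fun v _ => measurableSet_cyl hA.meas N v]

end Cylinder

lemma limsup_div_le_mul_limsup_div {k : ℕ} (hk : 1 ≤ k) {u v : ℕ → ℝ}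
    (huv : ∀ n, u n ≤ v (n * k)) :
    limsup (fun n : ℕ => ((u n / n : ℝ) : EReal)) atTop
      ≤ ((k : ℝ) : EReal) * limsup (fun n : ℕ => ((v n / n : ℝ) : EReal)) atTop := by
  have hk0 : (0 : ℝ) < k := by exact_mod_cast hk
  have hdiv : ∀ n : ℕ, u n / n ≤ k * (v (n * k) / ↑(n * k)) := fun n => by
    rw [Nat.cast_mul, mul_comm (n : ℝ), ← div_div, mul_div_assoc', mul_div_cancel₀ _ hk0.ne']
    exact div_le_div_of_nonneg_right (huv n) n.cast_nonneg
  have hmul : Tendsto (fun n : ℕ => n * k) atTop atTop :=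
    tendsto_id.atTop_mul_const' (by omega)
  calc limsup (fun n : ℕ => ((u n / n : ℝ) : EReal)) atTop
      ≤ limsup (fun n : ℕ => ((k : ℝ) : EReal) * ((v (n * k) / ↑(n * k) : ℝ) : EReal)) atTop :=
        limsup_le_limsup (Eventually.of_forall fun n => by
          dsimp only
          rw [← EReal.coe_mul]
          exact EReal.coe_le_coe_iff.mpr (hdiv n))
    _ = ((k : ℝ) : EReal) * limsup (fun n : ℕ => ((v (n * k) / ↑(n * k) : ℝ) : EReal)) atTop :=
        EReal.limsup_const_mul_of_nonneg_of_ne_top (EReal.coe_nonneg.mpr hk0.le)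
          (EReal.coe_ne_top _)
    _ ≤ ((k : ℝ) : EReal) * limsup (fun n : ℕ => ((v n / n : ℝ) : EReal)) atTop :=
        mul_le_mul_of_nonneg_left
          (hmul.limsup_comp_le_limsup (u := fun n : ℕ => ((v n / n : ℝ) : EReal)))
          (EReal.coe_nonneg.mpr hk0.le)

theorem hsd_restriction_le_general {X : Type*} [MeasurableSpace X]
    (μ : Measure (ℕ → X)) [IsProbabilityMeasure μ]
    (k : ℕ) (hk : 1 ≤ k) (r : ℕ → ℕ)
    (hrk : ∀ n, r n ≤ (n + 1) * k - 1) :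
    Hsd (Measure.map (fun x : ℕ → X => x ∘ r) μ) ≤ ((k : ℝ) : EReal) * Hsd μ := by
  have hr_lt : ∀ n, ∀ i : Fin n, r i < n * k := fun n i => by
    have h₁ := hrk i
    have h₂ : ((i : ℕ) + 1) * k ≤ n * k := Nat.mul_le_mul_right k i.isLt
    have h₃ : 1 ≤ ((i : ℕ) + 1) * k := Nat.one_le_iff_ne_zero.mpr (by positivity)
    omega
  refine iSup_le fun m => iSup_le fun A => iSup_le fun hA => ?_
  calc HsdP (μ.map fun x => x ∘ r) A
      ≤ ((k : ℝ) : EReal) * HsdP μ A :=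
        limsup_div_le_mul_limsup_div hk fun n => partEnt_map_comp_cyl_le μ hA (hr_lt n)
    _ ≤ ((k : ℝ) : EReal) * Hsd μ :=
        mul_le_mul_of_nonneg_left (le_iSup₂_of_le m A (le_iSup_of_le hA le_rfl))
          (EReal.coe_nonneg.mpr k.cast_nonneg)

/-- for a restriction map along `(r_n)` with `r_n ≤ (n+1)k − 1`,
`H^sd(𝔎_*μ) ≤ k·H^sd(μ)`. -/
theorem hsd_restriction_le {X : Type*} [MeasurableSpace X]
    (μ : Measure (ℕ → X)) [IsProbabilityMeasure μ]
    (k : ℕ) (hk : 1 ≤ k) (r : ℕ → ℕ) (hr : StrictMono r)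
    (hrk : ∀ n, r n ≤ (n + 1) * k - 1) :
    Hsd (Measure.map (fun x : ℕ → X => x ∘ r) μ) ≤ ((k : ℝ) : EReal) * Hsd μ :=
  hsd_restriction_le_general μ k hk r hrk
end

section
/- Variational inequality: let X be a compact metrizable space with its Borel σ-algebra, S ⊆ X^∞ an arbitrary subset, and μ a stationary (shift-invariant) Borel probability measure on X^∞ with supp(μ) ⊆ S. Then H^sd(μ) ≤ H^t(S), where H^t(S) is the topological entropy of S. -/
open MeasureTheory Filter
open scoped NNReal ENNReal

/-- Minimal number of length-`n` cylinders built from members of `U` needed to cover `S`. -/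
noncomputable def coverNum {X : Type*} (S : Set (ℕ → X)) (U : Set (Set X)) (n : ℕ) : ℕ :=
  sInf {m | ∃ F : Finset (Fin n → Set X), F.card = m ∧ (∀ w ∈ F, ∀ i, w i ∈ U) ∧
    S ⊆ ⋃ w ∈ F, {x : ℕ → X | ∀ i : Fin n, x i ∈ w i}}

/-- Topological entropy `H^t(S)` of an arbitrary subset `S ⊆ X^∞`. -/
noncomputable def Htop {X : Type*} [TopologicalSpace X] (S : Set (ℕ → X)) : EReal :=
  ⨆ (U : Set (Set X)) (_ : (∀ u ∈ U, IsOpen u) ∧ ⋃₀ U = Set.univ),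
    limsup (fun n : ℕ => ((Real.log (coverNum S U n) / n : ℝ) : EReal)) atTop

/-!
Fix a partition `A` of `X` into `k` cells and `0 < s < 1`. By regularity of the marginal `ν`
choose closed cores `Q i ⊆ A i` with `ν (A i \ Q i) < s / k`; the sets `avoidOthers Q j` form a
finite open cover `U` each member of which meets at most one core. Split every cell of `A` into
its core and its rim. A cylinder `C` of length `n` of the split partition with `μ C ≠ 0` meets
`supp μ ⊆ S`, hence meets a cylinder `v` of a minimal `U`-cover `F` of `S`, and `C` is determined
by `v` together with the rim letters it visits. Gibbs' inequality against the weights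
`|F|⁻¹ ∏ᵢ ω(Cᵢ)`, with `ω = 1 - s` on cores and `ω = s / k` on rims, then gives, by stationarity,
`H(μ, A^n) ≤ log N_S(U^n) + n (-log (1 - s) + s log k - s log s)`.
Divide by `n` and let `s → 0`.
-/

open Finset

section EntropyInequalities

variable {ι : Type*}

lemma sum_phi_le_phi_sum_s19 (s : Finset ι) {x : ι → ℝ} (hx : ∀ i ∈ s, 0 ≤ x i) :
    ∑ i ∈ s, phi (x i) ≤ phi (∑ i ∈ s, x i) := by
  have h : ∀ i ∈ s, phi (x i) ≤ x i * Real.log (∑ j ∈ s, x j) := by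
    intro i hi
    rcases (hx i hi).eq_or_lt with h0 | h0
    · simp [phi, ← h0]
    · exact mul_le_mul_of_nonneg_left (Real.log_le_log h0 (single_le_sum hx hi)) (hx i hi)
  calc ∑ i ∈ s, phi (x i) ≤ ∑ i ∈ s, x i * Real.log (∑ j ∈ s, x j) := sum_le_sum h
    _ = phi (∑ i ∈ s, x i) := by rw [phi, sum_mul]

/-- Gibbs' inequality. -/
lemma sum_mul_log_le_sum_phi (s : Finset ι) {p q : ι → ℝ} (hp : ∀ i ∈ s, 0 ≤ p i)
    (hq : ∀ i ∈ s, p i ≠ 0 → 0 < q i) (hsum : ∑ i ∈ s with p i ≠ 0, q i ≤ ∑ i ∈ s, p i) :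
    ∑ i ∈ s, p i * Real.log (q i) ≤ ∑ i ∈ s, phi (p i) := by
  have hterm : ∀ i ∈ {i ∈ s | p i ≠ 0}, p i * Real.log (q i) - phi (p i) ≤ q i - p i := by
    intro i hi
    obtain ⟨his, hpi⟩ := mem_filter.mp hi
    have hp0 : 0 < p i := (hp i his).lt_of_ne' hpi
    have hq0 := hq i his hpi
    have hlog := Real.log_le_sub_one_of_pos (div_pos hq0 hp0)
    rw [Real.log_div hq0.ne' hp0.ne'] at hlog
    calc p i * Real.log (q i) - phi (p i) = p i * (Real.log (q i) - Real.log (p i)) := by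
          rw [phi]; ring
      _ ≤ p i * (q i / p i - 1) := mul_le_mul_of_nonneg_left hlog hp0.le
      _ = q i - p i := by field_simp
  have hsupp : ∀ f : ι → ℝ, (∀ i, p i = 0 → f i = 0) → ∑ i ∈ s with p i ≠ 0, f i = ∑ i ∈ s, f i :=
    fun f hf => sum_filter_of_ne fun i _ hfi hpi => hfi (hf i hpi)
  have h := sum_le_sum hterm
  rw [sum_sub_distrib, sum_sub_distrib, hsupp _ (fun i hpi => by simp [hpi]),
    hsupp _ (fun i hpi => by simp [phi, hpi]), hsupp p (fun _ => id)] at h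
  linarith

end EntropyInequalities

section Partitions

variable {Ω ι κ : Type*} [MeasurableSpace Ω] (μ : Measure Ω)

lemma IsPartition.measureReal_eq_sum_fiber [IsFiniteMeasure μ] [Fintype κ] [DecidableEq ι]
    {A : ι → Set Ω} (hA : Pairwise (Function.onFun Disjoint A)) {P : κ → Set Ω}
    (hP : IsPartition P) {f : κ → ι} (hf : ∀ j, P j ⊆ A (f j)) (i : ι) :
    (μ (A i)).toReal = ∑ j with f j = i, (μ (P j)).toReal := by
  have hAi : A i = ⋃ j ∈ ({j | f j = i} : Finset κ), P j := by
    refine subset_antisymm (fun x hx => ?_) (Set.iUnion₂_subset fun j hj => ?_)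
    · obtain ⟨j, hj⟩ := Set.mem_iUnion.mp (hP.cover ▸ Set.mem_univ x)
      have hfj : f j = i := by
        by_contra hne
        exact Set.disjoint_left.mp (hA hne) (hf j hj) hx
      exact Set.mem_biUnion (by simpa using hfj) hj
    · exact (mem_filter.mp hj).2 ▸ hf j
  rw [hAi, ← measureReal_def, measureReal_biUnion_finset (fun j _ j' _ hne => hP.disj hne)
    (fun j _ => hP.meas j)]
  rfl

lemma IsPartition.sum_measureReal_eq_one [IsProbabilityMeasure μ] [Fintype ι] {A : ι → Set Ω}
    (hA : IsPartition A) : ∑ i, (μ (A i)).toReal = 1 := by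
  have h := measureReal_biUnion_finset (μ := μ) (s := univ) (fun i _ j _ hij => hA.disj hij)
    fun i _ => hA.meas i
  simpa [hA.cover, measureReal_def] using h.symm

lemma partEnt_le_partEnt_of_subset [IsFiniteMeasure μ] [Fintype ι] [Fintype κ]
    {A : ι → Set Ω} (hA : Pairwise (Function.onFun Disjoint A)) {B : κ → Set Ω}
    (hB : IsPartition B) (f : κ → ι) (hf : ∀ j, B j ⊆ A (f j)) :
    partEnt μ A ≤ partEnt μ B := by
  classical
  rw [partEnt, partEnt, neg_le_neg_iff, ← sum_fiberwise univ f]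
  refine sum_le_sum fun i _ => ?_
  rw [hB.measureReal_eq_sum_fiber μ hA hf i]
  exact sum_phi_le_phi_sum_s19 _ fun j _ => ENNReal.toReal_nonneg

lemma partEnt_le_neg_sum_mul_log [IsProbabilityMeasure μ] [Fintype κ] {B : κ → Set Ω}
    (hB : IsPartition B) {q : κ → ℝ} (hq : ∀ j, μ (B j) ≠ 0 → 0 < q j)
    (hsum : ∑ j with μ (B j) ≠ 0, q j ≤ 1) :
    partEnt μ B ≤ -∑ j, (μ (B j)).toReal * Real.log (q j) := by
  have hne : ∀ j, (μ (B j)).toReal ≠ 0 ↔ μ (B j) ≠ 0 := fun j => by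
    rw [ne_eq, ENNReal.toReal_eq_zero_iff, not_or, and_iff_left (measure_ne_top μ _)]
  rw [partEnt, neg_le_neg_iff]
  refine sum_mul_log_le_sum_phi _ (fun _ _ => ENNReal.toReal_nonneg)
    (fun j _ hj => hq j ((hne j).mp hj)) ?_
  simpa only [hne, hB.sum_measureReal_eq_one μ] using hsum

end Partitions

section Cylinders

variable {X ι : Type*}

lemma cyl_eq_iInter (A : ι → Set X) (n : ℕ) (w : Fin n → ι) :
    cyl A n w = ⋂ i : Fin n, (fun x : ℕ → X => x i) ⁻¹' A (w i) := by
  ext x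
  simp [cyl]

lemma IsPartition.cyl [MeasurableSpace X] {A : ι → Set X} (hA : IsPartition A) (n : ℕ) :
    IsPartition (cyl A n) where
  meas w := by
    rw [cyl_eq_iInter]
    exact .iInter fun i => measurable_pi_apply (i : ℕ) (hA.meas (w i))
  disj w w' hne := by
    obtain ⟨i, hi⟩ := Function.ne_iff.mp hne
    exact Set.disjoint_left.mpr fun x hx hx' => Set.disjoint_left.mp (hA.disj hi) (hx i) (hx' i)
  cover := by
    refine Set.eq_univ_of_forall fun x => ?_
    choose w hw using fun i : Fin n => Set.mem_iUnion.mp (hA.cover ▸ Set.mem_univ (x i))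
    exact Set.mem_iUnion.mpr ⟨w, hw⟩

lemma cyl_subset_cyl_comp {κ : Type*} {A : ι → Set X} {B : κ → Set X} {f : κ → ι}
    (hf : ∀ j, B j ⊆ A (f j)) (n : ℕ) (w : Fin n → κ) : cyl B n w ⊆ cyl A n (f ∘ w) :=
  fun _ hx i => hf _ (hx i)

lemma isOpen_cyl [TopologicalSpace X] {A : ι → Set X} {n : ℕ} {w : Fin n → ι}
    (hw : ∀ i, IsOpen (A (w i))) : IsOpen (cyl A n w) := by
  rw [cyl_eq_iInter]
  exact isOpen_iInter_of_finite fun i => (hw i).preimage (continuous_apply (i : ℕ))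

lemma shift_iterate_apply (i : ℕ) (x : ℕ → X) (m : ℕ) : shift^[i] x m = x (m + i) := by
  induction i generalizing x with
  | zero => rfl
  | succ i ih => rw [Function.iterate_succ_apply, ih]; rfl

variable [MeasurableSpace X] (μ : Measure (ℕ → X))

lemma sum_measureReal_cyl_mul [IsFiniteMeasure μ] [Fintype ι] {A : ι → Set X}
    (hA : IsPartition A) {n : ℕ} (i : Fin n) (g : ι → ℝ) :
    ∑ w, (μ (cyl A n w)).toReal * g (w i) =
      ∑ j, (μ ((fun x : ℕ → X => x i) ⁻¹' A j)).toReal * g j := by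
  classical
  rw [← sum_fiberwise univ (fun w : Fin n → ι => w i)]
  refine sum_congr rfl fun j _ => ?_
  rw [(hA.cyl n).measureReal_eq_sum_fiber μ (fun a b hab => (hA.disj hab).preimage _)
    (f := fun w => w i) (fun w x hx => hx i) j, sum_mul]
  exact sum_congr rfl fun w hw => by rw [(mem_filter.mp hw).2]

lemma measurable_shift : Measurable (shift : (ℕ → X) → ℕ → X) :=
  measurable_pi_lambda _ fun n => measurable_pi_apply (n + 1)

lemma measure_eval_preimage_of_map_shift (hstat : Measure.map shift μ = μ) {E : Set X}
    (hE : MeasurableSet E) (i : ℕ) :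
    μ ((fun x : ℕ → X => x i) ⁻¹' E) = μ ((fun x : ℕ → X => x 0) ⁻¹' E) := by
  have hpres := (MeasurePreserving.mk measurable_shift hstat).iterate i
  rw [← hpres.measure_preimage (measurable_pi_apply 0 hE).nullMeasurableSet]
  congr 1
  ext x
  simp [shift_iterate_apply]

end Cylinders

lemma measure_compl_eq_zero_of_support_subset {Ω : Type*} [TopologicalSpace Ω] [CompactSpace Ω]
    [MeasurableSpace Ω] (μ : Measure Ω) {T : Set Ω} (hT : IsOpen T)
    (hsupp : {x : Ω | ∀ U : Set Ω, IsOpen U → x ∈ U → μ U ≠ 0} ⊆ T) : μ Tᶜ = 0 := by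
  refine hT.isClosed_compl.isCompact.measure_zero_of_nhdsWithin fun x hx => ?_
  have hxsupp : x ∉ {x : Ω | ∀ U : Set Ω, IsOpen U → x ∈ U → μ U ≠ 0} := fun h => hx (hsupp h)
  simp only [Set.mem_ofPred_eq, not_forall, not_not] at hxsupp
  obtain ⟨U, hU, hxU, hU0⟩ := hxsupp
  exact ⟨U, mem_nhdsWithin_of_mem_nhds (hU.mem_nhds hxU), hU0⟩

section AvoidOthers

variable {X ι : Type*} (Q : ι → Set X)

def avoidOthers (j : ι) : Set X := (⋃ (i) (_ : i ≠ j), Q i)ᶜ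

variable {Q}

lemma isOpen_avoidOthers [TopologicalSpace X] [Finite ι] (hQ : ∀ i, IsClosed (Q i)) (j : ι) :
    IsOpen (avoidOthers Q j) :=
  (isClosed_iUnion_of_finite fun i => isClosed_iUnion_of_finite fun _ => hQ i).isOpen_compl

lemma subset_avoidOthers {A : ι → Set X} (hA : Pairwise (Function.onFun Disjoint A))
    (hQ : ∀ i, Q i ⊆ A i) (j : ι) : A j ⊆ avoidOthers Q j := by
  intro x hx hmem
  obtain ⟨i, hij, hxi⟩ := Set.mem_iUnion₂.mp hmem
  exact Set.disjoint_left.mp (hA hij) (hQ i hxi) hx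

lemma eq_of_mem_avoidOthers {i j : ι} {x : X} (hi : x ∈ Q i) (hj : x ∈ avoidOthers Q j) :
    i = j := by
  by_contra hij
  exact hj (Set.mem_iUnion₂.mpr ⟨i, hij, hi⟩)

lemma sUnion_range_avoidOthers [MeasurableSpace X] {A : ι → Set X} (hA : IsPartition A)
    (hQ : ∀ i, Q i ⊆ A i) : ⋃₀ Set.range (avoidOthers Q) = Set.univ := by
  rw [Set.sUnion_range]
  exact Set.eq_univ_of_univ_subset (hA.cover ▸ Set.iUnion_mono (subset_avoidOthers hA.disj hQ))

end AvoidOthers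

lemma exists_card_eq_coverNum {X : Type*} {U : Set (Set X)} (hU : U.Finite)
    (hcov : ⋃₀ U = Set.univ) (S : Set (ℕ → X)) (n : ℕ) :
    ∃ F : Finset (Fin n → Set X), F.card = coverNum S U n ∧ (∀ w ∈ F, ∀ i, w i ∈ U) ∧
      S ⊆ ⋃ w ∈ F, {x : ℕ → X | ∀ i : Fin n, x i ∈ w i} := by
  show coverNum S U n ∈ {m | ∃ F : Finset (Fin n → Set X), F.card = m ∧
    (∀ w ∈ F, ∀ i, w i ∈ U) ∧ S ⊆ ⋃ w ∈ F, {x : ℕ → X | ∀ i : Fin n, x i ∈ w i}}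
  refine Nat.sInf_mem ?_
  have hfin : (Set.univ.pi fun _ : Fin n => U).Finite := Set.Finite.pi fun _ => hU
  refine ⟨_, hfin.toFinset, rfl, fun w hw i => (hfin.mem_toFinset.mp hw) i (Set.mem_univ i),
    fun x _ => ?_⟩
  choose w hwU hxw using fun i : Fin n => Set.mem_sUnion.mp (hcov ▸ Set.mem_univ (x i))
  exact Set.mem_biUnion (hfin.mem_toFinset.mpr fun i _ => hwU i) hxw

section Split

variable {X ι : Type*} {A Q : ι → Set X}

variable (A Q) in
def splitPart (p : ι × Bool) : Set X := if p.2 then Q p.1 else A p.1 \ Q p.1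

/-- Records the cell of a label only off the cores `Q i`: points of a core are told apart
by the open cover instead. -/
def splitCode (p : ι × Bool) : Option ι := if p.2 then none else some p.1

lemma splitPart_subset (hQ : ∀ i, Q i ⊆ A i) (p : ι × Bool) : splitPart A Q p ⊆ A p.1 := by
  rcases p with ⟨i, _ | _⟩
  · exact Set.sdiff_subset
  · exact hQ i

lemma IsPartition.splitPart [MeasurableSpace X] (hA : IsPartition A) (hQ : ∀ i, Q i ⊆ A i)
    (hQm : ∀ i, MeasurableSet (Q i)) : IsPartition (splitPart A Q) where
  meas := by
    rintro ⟨i, _ | _⟩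
    · exact (hA.meas i).diff (hQm i)
    · exact hQm i
  disj := by
    rintro ⟨i, b⟩ ⟨j, c⟩ hne
    rcases eq_or_ne i j with rfl | hij
    · have hbc : b ≠ c := fun h => hne (h ▸ rfl)
      rcases b with _ | _ <;> rcases c with _ | _
      · exact absurd rfl hbc
      · exact disjoint_sdiff_self_left
      · exact disjoint_sdiff_self_right
      · exact absurd rfl hbc
    · exact (hA.disj hij).mono (splitPart_subset hQ _) (splitPart_subset hQ _)
  cover := by
    refine Set.eq_univ_of_forall fun x => ?_
    obtain ⟨i, hi⟩ := Set.mem_iUnion.mp (hA.cover ▸ Set.mem_univ x)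
    by_cases hx : x ∈ Q i
    · exact Set.mem_iUnion.mpr ⟨(i, true), hx⟩
    · exact Set.mem_iUnion.mpr ⟨(i, false), hi, hx⟩

lemma splitCode_comp_injOn {n : ℕ} {v : Fin n → Set X}
    (hv : ∀ i, {a | (Q a ∩ v i).Nonempty}.Subsingleton) :
    Set.InjOn (fun w : Fin n → ι × Bool => splitCode ∘ w)
      {w | (cyl (splitPart A Q) n w ∩ cyl id n v).Nonempty} := by
  rintro w ⟨x, hxw, hxv⟩ w' ⟨y, hyw, hyv⟩ hcode
  funext i
  have hc : splitCode (w i) = splitCode (w' i) := congrFun hcode i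
  have hx : x i ∈ splitPart A Q (w i) := hxw i
  have hy : y i ∈ splitPart A Q (w' i) := hyw i
  generalize w i = p at hc hx
  generalize w' i = p' at hc hy
  rcases p with ⟨a, _ | _⟩ <;> rcases p' with ⟨b, _ | _⟩ <;>
    simp only [splitCode, splitPart, if_true, if_false, reduceCtorEq, Option.some.injEq] at hc hx hy
  · rw [hc]
  · rw [hv i ⟨x i, hx, hxv i⟩ ⟨y i, hy, hyv i⟩]

end Split

lemma exists_mem_inter_cyl_of_measure_ne_zero {X : Type*} [MeasurableSpace X]
    (μ : Measure (ℕ → X)) {n : ℕ} {F : Finset (Fin n → Set X)}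
    (hF : μ (⋃ v ∈ F, cyl id n v)ᶜ = 0) {C : Set (ℕ → X)} (hC : μ C ≠ 0) :
    ∃ v ∈ F, (C ∩ cyl id n v).Nonempty := by
  by_contra h
  push Not at h
  refine hC (measure_mono_null ?_ hF)
  intro x hx hxF
  obtain ⟨v, hv, hxv⟩ := Set.mem_iUnion₂.mp hxF
  exact (h v hv).subset ⟨hx, hxv⟩

section CoverEstimate

variable {X ι : Type*} [MeasurableSpace X] [Fintype ι] {A Q : ι → Set X} (μ : Measure (ℕ → X))
  {n : ℕ} {F : Finset (Fin n → Set X)}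

lemma sum_weight_splitCode_le_one (hF : μ (⋃ v ∈ F, cyl id n v)ᶜ = 0)
    (hsep : ∀ v ∈ F, ∀ i, {a | (Q a ∩ v i).Nonempty}.Subsingleton)
    {ω : Option ι → ℝ} (hω : ∀ o, 0 ≤ ω o) (hω1 : ∑ o, ω o ≤ 1) :
    ∑ w with μ (cyl (splitPart A Q) n w) ≠ 0, (F.card : ℝ)⁻¹ * ∏ i, ω (splitCode (w i)) ≤ 1 := by
  classical
  set W : (Fin n → ι × Bool) → ℝ := fun w => ∏ i, ω (splitCode (w i))
  have hW : ∀ w, 0 ≤ W w := fun w => prod_nonneg fun i _ => hω _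
  set meets : (Fin n → ι × Bool) → (Fin n → Set X) → Prop :=
    fun w v => (cyl (splitPart A Q) n w ∩ cyl id n v).Nonempty
  have hfiber : ∀ v ∈ F, ∑ w with meets w v, W w ≤ 1 := by
    intro v hv
    calc ∑ w with meets w v, W w
        = ∑ o ∈ image (fun w => splitCode ∘ w) {w | meets w v}, ∏ i, ω (o i) :=
          (sum_image (s := {w | meets w v}) (g := fun w => splitCode ∘ w)
            (f := fun o => ∏ i, ω (o i)) fun w hw w' hw' =>
            splitCode_comp_injOn (hsep v hv) (mem_filter.mp hw).2 (mem_filter.mp hw').2).symm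
      _ ≤ ∑ o : Fin n → Option ι, ∏ i, ω (o i) :=
          sum_le_univ_sum_of_nonneg fun o => prod_nonneg fun i _ => hω _
      _ = (∑ o, ω o) ^ n := by rw [← Fintype.prod_sum, prod_const, card_univ, Fintype.card_fin]
      _ ≤ 1 := pow_le_one₀ (sum_nonneg fun o _ => hω o) hω1
  calc ∑ w with μ (cyl (splitPart A Q) n w) ≠ 0, (F.card : ℝ)⁻¹ * W w
      ≤ ∑ w with μ (cyl (splitPart A Q) n w) ≠ 0, ∑ v ∈ F with meets w v, (F.card : ℝ)⁻¹ * W w := by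
        refine sum_le_sum fun w hw => ?_
        obtain ⟨v, hv, hmeets⟩ :=
          exists_mem_inter_cyl_of_measure_ne_zero μ hF (mem_filter.mp hw).2
        exact single_le_sum (f := fun _ => (F.card : ℝ)⁻¹ * W w)
          (fun _ _ => mul_nonneg (by positivity) (hW w)) (mem_filter.mpr ⟨hv, hmeets⟩)
    _ ≤ ∑ w, ∑ v ∈ F with meets w v, (F.card : ℝ)⁻¹ * W w :=
        sum_le_univ_sum_of_nonneg fun w => sum_nonneg fun _ _ => mul_nonneg (by positivity) (hW w)
    _ = ∑ v ∈ F, (F.card : ℝ)⁻¹ * ∑ w with meets w v, W w := by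
        simp only [sum_filter, mul_sum, mul_ite, mul_zero]
        exact sum_comm
    _ ≤ ∑ v ∈ F, (F.card : ℝ)⁻¹ * 1 :=
        sum_le_sum fun v hv => mul_le_mul_of_nonneg_left (hfiber v hv) (by positivity)
    _ ≤ 1 := by
        rw [sum_const, nsmul_eq_mul, mul_one]
        rcases eq_or_ne (F.card : ℝ) 0 with h | h <;> simp [h]

theorem partEnt_cyl_le_log_card_add [IsProbabilityMeasure μ] (hstat : Measure.map shift μ = μ)
    (hA : IsPartition A) (hQ : ∀ i, Q i ⊆ A i) (hQm : ∀ i, MeasurableSet (Q i))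
    (hF : μ (⋃ v ∈ F, cyl id n v)ᶜ = 0)
    (hsep : ∀ v ∈ F, ∀ i, {a | (Q a ∩ v i).Nonempty}.Subsingleton)
    {ω : Option ι → ℝ} (hω : ∀ o, 0 < ω o) (hω1 : ∑ o, ω o ≤ 1) :
    partEnt μ (cyl A n) ≤ Real.log F.card + n * ∑ p,
      (μ.map (fun x => x 0) (splitPart A Q p)).toReal * -Real.log (ω (splitCode p)) := by
  set B := splitPart A Q
  have hB : IsPartition B := hA.splitPart hQ hQm
  have hFpos : (0 : ℝ) < F.card := by
    obtain ⟨v, hv, -⟩ := exists_mem_inter_cyl_of_measure_ne_zero μ hF (C := Set.univ) (by simp)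
    exact_mod_cast card_pos.mpr ⟨v, hv⟩
  set q : (Fin n → ι × Bool) → ℝ := fun w => (F.card : ℝ)⁻¹ * ∏ i, ω (splitCode (w i))
  have hlog_q : ∀ w, Real.log (q w) = -Real.log F.card + ∑ i, Real.log (ω (splitCode (w i))) := by
    intro w
    rw [Real.log_mul (inv_pos.mpr hFpos).ne' (prod_ne_zero_iff.mpr fun i _ => (hω _).ne'),
      Real.log_inv, Real.log_prod fun i _ => (hω _).ne']
  have hmarginal : ∀ i : Fin n,
      ∑ w, (μ (cyl B n w)).toReal * -Real.log (ω (splitCode (w i))) =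
        ∑ p, (μ.map (fun x => x 0) (B p)).toReal * -Real.log (ω (splitCode p)) := by
    intro i
    rw [sum_measureReal_cyl_mul μ hB i fun p => -Real.log (ω (splitCode p))]
    refine sum_congr rfl fun p _ => ?_
    rw [Measure.map_apply (measurable_pi_apply 0) (hB.meas p),
      measure_eval_preimage_of_map_shift μ hstat (hB.meas p)]
  calc partEnt μ (cyl A n) ≤ partEnt μ (cyl B n) :=
        partEnt_le_partEnt_of_subset μ (hA.cyl n).disj (hB.cyl n) _
          (cyl_subset_cyl_comp (splitPart_subset hQ) n)
    _ ≤ -∑ w, (μ (cyl B n w)).toReal * Real.log (q w) :=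
        partEnt_le_neg_sum_mul_log μ (hB.cyl n)
          (fun w _ => mul_pos (inv_pos.mpr hFpos) (prod_pos fun i _ => hω _))
          (sum_weight_splitCode_le_one μ hF hsep (fun o => (hω o).le) hω1)
    _ = (∑ w, (μ (cyl B n w)).toReal) * Real.log F.card +
          ∑ i, ∑ w, (μ (cyl B n w)).toReal * -Real.log (ω (splitCode (w i))) := by
        simp only [hlog_q, mul_add, mul_sum, sum_mul, sum_add_distrib]
        rw [sum_comm (s := univ (α := Fin n))]
        simp only [mul_neg, sum_neg_distrib, neg_add, neg_neg]
    _ = Real.log F.card + n * ∑ p,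
          (μ.map (fun x => x 0) (B p)).toReal * -Real.log (ω (splitCode p)) := by
        rw [(hB.cyl n).sum_measureReal_eq_one μ, one_mul]
        simp only [hmarginal, sum_const, card_univ, Fintype.card_fin, nsmul_eq_mul]

end CoverEstimate

lemma sum_measureReal_splitPart_mul_neg_log_le {X ι : Type*} [MeasurableSpace X] [Fintype ι]
    [Nonempty ι] {A Q : ι → Set X} (ν : Measure X) [IsProbabilityMeasure ν] (hA : IsPartition A)
    (hQ : ∀ i, Q i ⊆ A i) {s : ℝ} (hs0 : 0 < s) (hs1 : s < 1)
    (hQs : ∀ i, ν (A i \ Q i) ≤ ENNReal.ofReal (s / Fintype.card ι)) :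
    ∑ p, (ν (splitPart A Q p)).toReal *
        -Real.log ((splitCode p).elim (1 - s) fun _ => s / Fintype.card ι) ≤
      -Real.log (1 - s) + s * Real.log (Fintype.card ι) - phi s := by
  set k : ℝ := (Fintype.card ι : ℝ)
  have hk : 0 < k := Nat.cast_pos.mpr Fintype.card_pos
  have hcore : 0 ≤ -Real.log (1 - s) := neg_nonneg.mpr (Real.log_nonpos (by linarith) (by linarith))
  have hrim : -Real.log (s / k) = Real.log k - Real.log s := by
    rw [Real.log_div hs0.ne' hk.ne']; ring
  have hrim_nonneg : 0 ≤ Real.log k - Real.log s :=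
    sub_nonneg.mpr (Real.log_le_log hs0 (hs1.le.trans (Nat.one_le_cast.mpr Fintype.card_pos)))
  have hQ_sum : ∑ i, (ν (Q i)).toReal ≤ 1 :=
    (sum_le_sum fun i _ => ENNReal.toReal_mono (measure_ne_top ν _) (measure_mono (hQ i))).trans
      (hA.sum_measureReal_eq_one ν).le
  have hrim_sum : ∑ i, (ν (A i \ Q i)).toReal ≤ s := by
    calc ∑ i, (ν (A i \ Q i)).toReal ≤ ∑ _i : ι, s / k :=
          sum_le_sum fun i _ => ENNReal.toReal_le_of_le_ofReal (by positivity) (hQs i)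
      _ = s := by rw [sum_const, card_univ, nsmul_eq_mul, mul_div_cancel₀ _ hk.ne']
  rw [Fintype.sum_prod_type]
  simp only [Fintype.sum_bool, splitPart, splitCode, if_true, if_false, Bool.false_eq_true,
    Option.elim, hrim]
  calc ∑ i, ((ν (Q i)).toReal * -Real.log (1 - s) +
        (ν (A i \ Q i)).toReal * (Real.log k - Real.log s))
      = (∑ i, (ν (Q i)).toReal) * -Real.log (1 - s) +
          (∑ i, (ν (A i \ Q i)).toReal) * (Real.log k - Real.log s) := by
        rw [sum_add_distrib, sum_mul, sum_mul]
    _ ≤ 1 * -Real.log (1 - s) + s * (Real.log k - Real.log s) := by gcongr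
    _ = -Real.log (1 - s) + s * Real.log k - phi s := by rw [phi]; ring

lemma limsup_div_le_limsup_div_add {a b : ℕ → ℝ} {c : ℝ} (h : ∀ n : ℕ, a n ≤ b n + n * c) :
    limsup (fun n : ℕ => ((a n / n : ℝ) : EReal)) atTop ≤
      limsup (fun n : ℕ => ((b n / n : ℝ) : EReal)) atTop + c := by
  calc limsup (fun n : ℕ => ((a n / n : ℝ) : EReal)) atTop
      ≤ limsup (fun n : ℕ => ((b n / n : ℝ) : EReal) + (c : EReal)) atTop := by
        refine limsup_le_limsup (eventually_ge_atTop 1 |>.mono fun n hn => ?_)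
        have hn' : (0 : ℝ) < n := Nat.cast_pos.mpr hn
        dsimp only
        rw [← EReal.coe_add, EReal.coe_le_coe_iff, div_add' _ _ _ hn'.ne']
        exact div_le_div_of_nonneg_right (by linarith [h n]) hn'.le
    _ ≤ limsup (fun n : ℕ => ((b n / n : ℝ) : EReal)) atTop + limsup (fun _ => (c : EReal)) atTop :=
        EReal.limsup_add_le (Or.inr (by simp)) (Or.inr (by simp))
    _ = _ := by rw [limsup_const]

lemma EReal.le_of_eventually_le_add_of_tendsto {x y : EReal} {l : Filter ℝ} [l.NeBot]
    {c : ℝ → ℝ} (hc : Tendsto c l (nhds 0)) (h : ∀ᶠ s in l, x ≤ y + c s) : x ≤ y := by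
  induction y using EReal.rec with
  | bot => simpa using h.exists
  | coe r =>
    refine EReal.le_of_forall_lt_iff_le.mp fun z hz => ?_
    have hrz : (0 : ℝ) < z - r := _root_.sub_pos.mpr (EReal.coe_lt_coe_iff.mp hz)
    obtain ⟨s, hs, hcs⟩ := (h.and (hc.eventually (gt_mem_nhds hrz))).exists
    refine hs.trans ?_
    rw [← EReal.coe_add, EReal.coe_le_coe_iff]
    linarith
  | top => exact le_top

lemma limsup_log_coverNum_le_htop {X : Type*} [TopologicalSpace X] {U : Set (Set X)}
    (hU : ∀ u ∈ U, IsOpen u) (hcov : ⋃₀ U = Set.univ) (S : Set (ℕ → X)) :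
    limsup (fun n : ℕ => ((Real.log (coverNum S U n) / n : ℝ) : EReal)) atTop ≤ Htop S :=
  le_iSup₂_of_le (f := fun (U : Set (Set X)) (_ : (∀ u ∈ U, IsOpen u) ∧ ⋃₀ U = Set.univ) =>
    limsup (fun n : ℕ => ((Real.log (coverNum S U n) / n : ℝ) : EReal)) atTop) U ⟨hU, hcov⟩ le_rfl

theorem partEnt_cyl_le_log_coverNum_add {X : Type*} [TopologicalSpace X] [CompactSpace X]
    [MeasurableSpace X] [OpensMeasurableSpace X] (μ : Measure (ℕ → X)) [IsProbabilityMeasure μ]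
    (hstat : Measure.map shift μ = μ) {S : Set (ℕ → X)}
    (hsupp : {x : ℕ → X | ∀ U : Set (ℕ → X), IsOpen U → x ∈ U → μ U ≠ 0} ⊆ S)
    {ι : Type*} [Fintype ι] [Nonempty ι] {A Q : ι → Set X} (hA : IsPartition A)
    (hQA : ∀ i, Q i ⊆ A i) (hQc : ∀ i, IsClosed (Q i)) {s : ℝ} (hs0 : 0 < s) (hs1 : s < 1)
    (hQs : ∀ i, μ.map (fun x => x 0) (A i \ Q i) ≤ ENNReal.ofReal (s / Fintype.card ι))
    (n : ℕ) :
    partEnt μ (cyl A n) ≤ Real.log (coverNum S (Set.range (avoidOthers Q)) n) +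
      n * (-Real.log (1 - s) + s * Real.log (Fintype.card ι) - phi s) := by
  have : IsProbabilityMeasure (μ.map fun x => x 0) :=
    Measure.isProbabilityMeasure_map (measurable_pi_apply 0).aemeasurable
  have hk : (0 : ℝ) < Fintype.card ι := Nat.cast_pos.mpr Fintype.card_pos
  obtain ⟨F, hFcard, hFU, hSF⟩ := exists_card_eq_coverNum (Set.finite_range _)
    (sUnion_range_avoidOthers hA hQA) S n
  have hF : μ (⋃ v ∈ F, cyl id n v)ᶜ = 0 := by
    refine measure_compl_eq_zero_of_support_subset μ (isOpen_biUnion fun v hv => ?_)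
      (hsupp.trans hSF)
    refine isOpen_cyl fun i => ?_
    obtain ⟨j, hj⟩ := hFU v hv i
    exact hj ▸ isOpen_avoidOthers hQc j
  have hsep : ∀ v ∈ F, ∀ i, {a | (Q a ∩ v i).Nonempty}.Subsingleton := by
    rintro v hv i a ⟨y, hya, hyv⟩ b ⟨z, hzb, hzv⟩
    obtain ⟨j, hj⟩ := hFU v hv i
    rw [← hj] at hyv hzv
    rw [eq_of_mem_avoidOthers hya hyv, eq_of_mem_avoidOthers hzb hzv]
  have hω : ∀ o : Option ι, 0 < o.elim (1 - s) fun _ => s / Fintype.card ι := by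
    rintro (_ | _)
    · exact sub_pos.mpr hs1
    · exact div_pos hs0 hk
  have hω1 : ∑ o : Option ι, o.elim (1 - s) (fun _ => s / Fintype.card ι) ≤ 1 := by
    rw [Fintype.sum_option]
    simp only [Option.elim, sum_const, card_univ, nsmul_eq_mul]
    rw [mul_div_cancel₀ _ hk.ne']
    linarith
  rw [← hFcard]
  refine (partEnt_cyl_le_log_card_add μ hstat hA hQA (fun i => (hQc i).measurableSet) hF hsep
    hω hω1).trans ?_
  gcongr
  exact sum_measureReal_splitPart_mul_neg_log_le _ hA hQA hs0 hs1 hQs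

theorem hsdP_le_htop_add {X : Type*} [TopologicalSpace X] [CompactSpace X]
    [TopologicalSpace.MetrizableSpace X] [MeasurableSpace X] [BorelSpace X] (μ : Measure (ℕ → X))
    [IsProbabilityMeasure μ] (hstat : Measure.map shift μ = μ) (S : Set (ℕ → X))
    (hsupp : {x : ℕ → X | ∀ U : Set (ℕ → X), IsOpen U → x ∈ U → μ U ≠ 0} ⊆ S)
    {ι : Type*} [Fintype ι] [Nonempty ι] {A : ι → Set X} (hA : IsPartition A)
    {s : ℝ} (hs0 : 0 < s) (hs1 : s < 1) :
    HsdP μ A ≤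
      Htop S + ((-Real.log (1 - s) + s * Real.log (Fintype.card ι) - phi s : ℝ) : EReal) := by
  have hks : 0 < s / Fintype.card ι := div_pos hs0 (Nat.cast_pos.mpr Fintype.card_pos)
  choose Q hQA hQc hQs using fun i => (hA.meas i).exists_isClosed_sdiff_lt
    (measure_ne_top (μ.map fun x => x 0) (A i)) (ENNReal.ofReal_pos.mpr hks).ne'
  calc HsdP μ A
      ≤ limsup (fun n : ℕ => ((Real.log (coverNum S (Set.range (avoidOthers Q)) n) / n : ℝ) :
          EReal)) atTop +
        ((-Real.log (1 - s) + s * Real.log (Fintype.card ι) - phi s : ℝ) : EReal) :=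
        limsup_div_le_limsup_div_add <| partEnt_cyl_le_log_coverNum_add μ hstat hsupp hA hQA hQc
          hs0 hs1 fun i => (hQs i).le
    _ ≤ _ := by
        gcongr
        exact limsup_log_coverNum_le_htop (Set.forall_mem_range.mpr (isOpen_avoidOthers hQc))
          (sUnion_range_avoidOthers hA hQA) S

/-- Variational Inequality: for `X` compact metrizable, `S ⊆ X^∞` arbitrary and
`μ` a stationary Borel probability measure with `supp(μ) ⊆ S`, `H^sd(μ) ≤ H^t(S)`. -/
theorem variational_inequality {X : Type*} [TopologicalSpace X] [CompactSpace X]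
    [TopologicalSpace.MetrizableSpace X] [MeasurableSpace X] [BorelSpace X]
    (μ : Measure (ℕ → X)) [IsProbabilityMeasure μ]
    (hstat : Measure.map shift μ = μ)
    (S : Set (ℕ → X))
    (hsupp : {x : ℕ → X | ∀ U : Set (ℕ → X), IsOpen U → x ∈ U → μ U ≠ 0} ⊆ S) :
    Hsd μ ≤ Htop S := by
  refine iSup_le fun k => iSup_le fun A => iSup_le fun hA => ?_
  have : Nonempty X := ⟨(nonempty_of_isProbabilityMeasure μ).some 0⟩
  have : Nonempty (Fin k) :=
    ⟨(Set.mem_iUnion.mp (hA.cover ▸ Set.mem_univ (Classical.arbitrary X))).choose⟩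
  have hcont : ContinuousAt (fun s : ℝ => -Real.log (1 - s) + s * Real.log k - phi s) 0 :=
    (((continuousAt_const.sub continuousAt_id).log (by norm_num)).neg.add
      (continuousAt_id.mul continuousAt_const)).sub Real.continuous_mul_log.continuousAt
  have hlim : Tendsto (fun s : ℝ => -Real.log (1 - s) + s * Real.log k - phi s)
      (nhdsWithin 0 (Set.Ioi 0)) (nhds 0) := by
    simpa [phi] using hcont.tendsto.mono_left nhdsWithin_le_nhds
  refine EReal.le_of_eventually_le_add_of_tendsto hlim ?_
  filter_upwards [Ioo_mem_nhdsGT one_pos] with s hs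
  simpa using hsdP_le_htop_add μ hstat S hsupp hA hs.1 hs.2
end
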